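/- Let $A \in \mathbb{R}^{m \times n}$ and let $[m] = \mathcal{P}_1 \uplus \cdots \uplus \mathcal{P}_p$ be a partition into disjoint parts. Every coefficient $c_{i_1,\dots,i_p}$ of the multivariate characteristic polynomial $\det(AA^T - x_1 I_1 - \cdots - x_p I_p)$ satisfies $(-1)^{i_1 + \cdots + i_p} c_{i_1,\dots,i_p} \ge 0$; that is, the sign of each coefficient is determined by the parity of the total degree of its monomial. -/

import Mathlib

/-!
Write the matrix as `M + diagonal d` with `d i = -x_{part i}`. Expanding the determinant
multilinearly in the rows gives `det (M + diagonal d) = ∑_s (∏_{i ∉ s} d i) · det M[s, s]`, so the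
coefficient of `x^e` is `(-1)^{|e|}` times a sum of principal minors of `M`. For `M = A Aᵀ` these
minors are determinants of positive semidefinite matrices, hence nonnegative.
-/

open scoped Matrix

/-- The coefficient `c_{e₁,…,e_p}` of the monomial `x₁^{e₁} ⋯ x_p^{e_p}` in the multivariate
characteristic polynomial `det(M - x₁I₁ - ⋯ - x_pI_p)`, where the partition
`[m] = 𝒫₁ ⊎ ⋯ ⊎ 𝒫_p` is encoded by the labelling function `part` (so `𝒫_l = part⁻¹(l)`),
and `I_l` is the diagonal 0/1 matrix supported on `𝒫_l`. -/
noncomputable def mcharCoeff {m p : ℕ} (M : Matrix (Fin m) (Fin m) ℝ) (part : Fin m → Fin p)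
    (e : Fin p → ℕ) : ℝ :=
  MvPolynomial.coeff (Finsupp.equivFunOnFinite.symm e)
    (Matrix.det (Matrix.of fun i j =>
      MvPolynomial.C (M i j) - (if i = j then MvPolynomial.X (part i) else 0)))

open Matrix Finset

namespace Matrix

variable {ι R : Type*} [Fintype ι] [DecidableEq ι] [CommRing R]

theorem det_add_diagonal (M : Matrix ι ι R) (d : ι → R) :
    (M + diagonal d).det =
      ∑ s : Finset ι, (∏ i ∈ sᶜ, d i) * (M.submatrix ((↑) : s → ι) (↑)).det := by
  have hsplit : M + diagonal d = M.row + fun i => d i • (1 : Matrix ι ι R).row i := by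
    ext i j
    change M i j + diagonal d i j = M i j + d i * (1 : Matrix ι ι R) i j
    rcases eq_or_ne i j with rfl | h <;> simp [*]
  have hscale (s : Finset ι) : s.piecewise M.row (fun i => d i • (1 : Matrix ι ι R).row i) =
      fun i => (if i ∈ s then 1 else d i) • s.piecewise M.row (1 : Matrix ι ι R).row i := by
    funext i
    by_cases h : i ∈ s <;> simp [h]
  rw [det, hsplit, (detRowAlternating : (ι → R) [⋀^ι]→ₗ[R] R).map_add_univ]
  refine sum_congr rfl fun s _ => ?_
  rw [hscale, AlternatingMap.map_smul_univ, prod_ite, prod_const_one, one_mul, smul_eq_mul]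
  congr 1
  · exact prod_congr (by ext; simp) fun _ _ => rfl
  · exact det_piecewise_one_eq_submatrix_det M s

end Matrix

namespace MvPolynomial

variable {σ α R : Type*} [CommRing R]

theorem prod_neg_X_eq_monomial (t : Finset α) (f : α → σ) :
    ∏ i ∈ t, (-X (f i) : MvPolynomial σ R) =
      monomial (∑ i ∈ t, Finsupp.single (f i) 1) ((-1) ^ #t) := by
  rw [← prod_const, monomial_sum_prod]
  refine prod_congr rfl fun i _ => ?_
  rw [X, ← map_neg]

end MvPolynomial

theorem Finsupp.card_eq_sum_of_sum_single_eq {σ α : Type*} [Fintype σ] {t : Finset α}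
    {f : α → σ} {e : σ → ℕ}
    (h : ∑ i ∈ t, Finsupp.single (f i) 1 = Finsupp.equivFunOnFinite.symm e) :
    #t = ∑ l, e l := by
  simpa [map_sum, Finsupp.degree_eq_sum] using congrArg Finsupp.degree h

open MvPolynomial in
theorem mcharCoeff_eq_sum_minors {m p : ℕ} (M : Matrix (Fin m) (Fin m) ℝ)
    (part : Fin m → Fin p) (e : Fin p → ℕ) :
    mcharCoeff M part e = ∑ s : Finset (Fin m),
      if ∑ i ∈ sᶜ, Finsupp.single (part i) 1 = Finsupp.equivFunOnFinite.symm e then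
        (-1) ^ #sᶜ * (M.submatrix ((↑) : s → Fin m) (↑)).det else 0 := by
  have hsplit : (of fun i j => C (M i j) - if i = j then X (part i) else 0) =
      M.map C + diagonal fun i => (-X (part i) : MvPolynomial (Fin p) ℝ) := by
    ext i j
    rcases eq_or_ne i j with rfl | h <;> simp [*, sub_eq_add_neg]
  rw [mcharCoeff, hsplit, det_add_diagonal, coeff_sum]
  refine sum_congr rfl fun s _ => ?_
  rw [prod_neg_X_eq_monomial, submatrix_map, ← RingHom.mapMatrix_apply, ← RingHom.map_det,
    mul_comm, C_mul_monomial, coeff_monomial, mul_comm (det _)]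

/-- every coefficient `c_{i₁,…,i_p}` of the multivariate characteristic polynomial
`det(AA^T - x₁I₁ - ⋯ - x_pI_p)` satisfies `(-1)^{i₁+⋯+i_p} c_{i₁,…,i_p} ≥ 0`. -/
theorem statement3 {m n p : ℕ} (A : Matrix (Fin m) (Fin n) ℝ) (part : Fin m → Fin p)
    (e : Fin p → ℕ) :
    0 ≤ (-1 : ℝ) ^ (∑ l, e l) * mcharCoeff (A * Aᵀ) part e := by
  have hpsd : (A * Aᵀ).PosSemidef := by simpa using posSemidef_self_mul_conjTranspose A
  rw [mcharCoeff_eq_sum_minors, mul_sum]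
  refine sum_nonneg fun s _ => ?_
  split_ifs with hdeg
  · rw [Finsupp.card_eq_sum_of_sum_single_eq hdeg, ← mul_assoc, ← pow_add,
      Even.neg_one_pow ⟨_, rfl⟩, one_mul]
    exact (hpsd.submatrix _).det_nonneg
  · rw [mul_zero]
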